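/- Let ℓ ≥ 2 and let H = (V, E) be an ℓ-uniform hypergraph with |V| ≥ ℓ. Then the number of vertices of H whose degree is strictly greater than (ℓ−1)·|E|/|V| is at least |E|/binom(|V|−1, ℓ−1). -/

import Mathlib

open Finset
open scoped Classical

/-- An `ℓ`-uniform hypergraph on vertex set `Fin n`: a finite set of edges, each an
`ℓ`-element subset of the vertices. -/
structure FinUniformHypergraph (n ℓ : ℕ) where
  edges : Finset (Finset (Fin n))
  uniform : ∀ e ∈ edges, e.card = ℓ

/-- The degree of a vertex `v`: the number of edges containing `v`. -/
def FinUniformHypergraph.degree {n ℓ : ℕ} (H : FinUniformHypergraph n ℓ) (v : Fin n) : ℕ :=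
  (H.edges.filter (fun e => v ∈ e)).card

/-!
Since `H` is `ℓ`-uniform, the degrees sum to `ℓ|E|`. The vertices of degree at most
`t = (ℓ-1)|E|/|V|` contribute at most `|V| t = (ℓ-1)|E|` to this sum, so the remaining vertices
carry degree at least `|E|`. A vertex lies in at most `binom(|V|-1, ℓ-1)` edges, so there are at
least `|E| / binom(|V|-1, ℓ-1)` of them.
-/

namespace Finset

theorem sum_sub_card_mul_le_card_filter_lt_mul {ι : Type*} (s : Finset ι) {f : ι → ℝ}
    {t M : ℝ} (ht : 0 ≤ t) (hM : ∀ i ∈ s, f i ≤ M) :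
    ∑ i ∈ s, f i - #s * t ≤ #{i ∈ s | t < f i} * M := by
  have hhigh : ∑ i ∈ s with t < f i, f i ≤ #{i ∈ s | t < f i} * M :=
    (sum_le_card_nsmul _ _ _ fun i hi => hM i (mem_filter.1 hi).1).trans_eq (nsmul_eq_mul _ _)
  have hlow : ∑ i ∈ s with ¬t < f i, f i ≤ #s * t :=
    calc ∑ i ∈ s with ¬t < f i, f i ≤ #{i ∈ s | ¬t < f i} * t :=
          (sum_le_card_nsmul _ _ _ fun i hi => not_lt.1 (mem_filter.1 hi).2).trans_eq
            (nsmul_eq_mul _ _)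
      _ ≤ #s * t := by gcongr; exact filter_subset _ _
  linarith [sum_filter_add_sum_filter_not s (fun i => t < f i) f]

variable {α : Type*} [Fintype α] [DecidableEq α] {𝒜 : Finset (Finset α)} {ℓ : ℕ}

theorem sum_card_filter_mem_eq_mul_card (h𝒜 : (𝒜 : Set (Finset α)).Sized ℓ) :
    ∑ a, #{s ∈ 𝒜 | a ∈ s} = ℓ * #𝒜 := by
  have := sum_card_bipartiteAbove_eq_sum_card_bipartiteBelow (s := univ) (t := 𝒜)
    (r := fun a s => a ∈ s)
  simp only [bipartiteAbove, bipartiteBelow, filter_mem_eq_inter, univ_inter] at this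
  rw [this, sum_congr rfl fun s hs => h𝒜 hs, sum_const, smul_eq_mul, mul_comm]

theorem card_filter_mem_le_choose (h𝒜 : (𝒜 : Set (Finset α)).Sized ℓ) (a : α) :
    #{s ∈ 𝒜 | a ∈ s} ≤ (Fintype.card α - 1).choose (ℓ - 1) := by
  rw [← card_univ, ← card_erase_of_mem (mem_univ a), ← card_powersetCard]
  refine card_le_card_of_injOn (fun s => s.erase a) (fun s hs => ?_) (fun s hs u hu hsu => ?_)
  · obtain ⟨hs𝒜, has⟩ := mem_filter.1 hs
    exact mem_powersetCard.2 ⟨erase_subset_erase _ (subset_univ s),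
      by rw [card_erase_of_mem has, h𝒜 hs𝒜]⟩
  · rw [← insert_erase (mem_filter.1 hs).2, ← insert_erase (mem_filter.1 hu).2]
    exact congrArg (insert a) hsu

end Finset

theorem many_high_degree_vertices_general (ℓ n : ℕ) (hℓ : 2 ≤ ℓ)
    (H : FinUniformHypergraph n ℓ) :
    (H.edges.card : ℝ) / ((n - 1).choose (ℓ - 1) : ℝ) ≤
      (((Finset.univ : Finset (Fin n)).filter
          (fun v => ((ℓ : ℝ) - 1) * (H.edges.card : ℝ) / (n : ℝ) < (H.degree v : ℝ))).card
        : ℝ) := by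
  set t : ℝ := ((ℓ : ℝ) - 1) * H.edges.card / n
  have hsized : (H.edges : Set (Finset (Fin n))).Sized ℓ := fun e he => H.uniform e he
  have hsum : ∑ v, (H.degree v : ℝ) = ℓ * H.edges.card := by
    exact_mod_cast sum_card_filter_mem_eq_mul_card hsized
  have hmax (v : Fin n) : (H.degree v : ℝ) ≤ (n - 1).choose (ℓ - 1) := by
    exact_mod_cast Fintype.card_fin n ▸ card_filter_mem_le_choose hsized v
  have hexcess : 0 ≤ ((ℓ : ℝ) - 1) * H.edges.card :=
    mul_nonneg (sub_nonneg.2 (by exact_mod_cast (by omega : 1 ≤ ℓ))) (Nat.cast_nonneg _)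
  have ht : 0 ≤ t := div_nonneg hexcess (Nat.cast_nonneg n)
  have hnt : n * t ≤ ((ℓ : ℝ) - 1) * H.edges.card := by
    rcases eq_or_ne (n : ℝ) 0 with hn0 | hn0
    · rwa [hn0, zero_mul]
    · rw [mul_div_cancel₀ _ hn0]
  have hcount := Finset.sum_sub_card_mul_le_card_filter_lt_mul univ ht fun v _ => hmax v
  rw [hsum, card_univ, Fintype.card_fin] at hcount
  exact div_le_of_le_mul₀ (by positivity) (by positivity) (by linarith)

/-- **Many vertices of nearly average degree.** In an `ℓ`-uniform hypergraph `H = (V, E)`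
with `ℓ ≥ 2` and `|V| ≥ ℓ`, at least `|E| / binom(|V|−1, ℓ−1)` vertices have degree strictly
greater than `(ℓ−1)·|E|/|V|`. -/
theorem many_high_degree_vertices (ℓ n : ℕ) (hℓ : 2 ≤ ℓ) (hn : ℓ ≤ n)
    (H : FinUniformHypergraph n ℓ) :
    (H.edges.card : ℝ) / ((n - 1).choose (ℓ - 1) : ℝ) ≤
      (((Finset.univ : Finset (Fin n)).filter
          (fun v => ((ℓ : ℝ) - 1) * (H.edges.card : ℝ) / (n : ℝ) < (H.degree v : ℝ))).card
        : ℝ) :=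
  many_high_degree_vertices_general ℓ n hℓ H
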